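/- arXiv:1903.05301 — 5 statements merged into one kernel-verified Lean document; each statement's English description precedes it below -/
import Mathlib

section
/- Define ρ(p,q) = p⁰q⁰ - p·q - 1. Then for all p, q ∈ ℝ³: (|p-q|² + |p×q|²)/(2p⁰q⁰) ≤ ρ(p,q) ≤ |p-q|²/2. -/
noncomputable section
open Matrix MeasureTheory

abbrev E3 := EuclideanSpace ℝ (Fin 3)

/-- the energy p⁰ = √(1+|p|²) -/
def en (p : E3) : ℝ := Real.sqrt (1 + ‖p‖^2)

/-- the cross product p × q -/
def cross3 (p q : E3) : E3 :=
  (WithLp.equiv 2 (Fin 3 → ℝ)).symm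
    ![p 1 * q 2 - p 2 * q 1, p 2 * q 0 - p 0 * q 2, p 0 * q 1 - p 1 * q 0]

/-- the relative momentum ρ(p,q) = p⁰q⁰ - p·q - 1 -/
def rel (p q : E3) : ℝ := en p * en q - (inner ℝ p q : ℝ) - 1

/-!
Write a = p⁰, b = q⁰, s = p·q. Lagrange's identity |p×q|² = |p|²|q|² - s² together with
(ab)² = (1+|p|²)(1+|q|²) gives the exact identities 2abρ = |p-q|² + |p×q|² + ρ² and
|p-q|² = 2ρ + (a-b)², so each bound is obtained by dropping a square.
-/

lemma cross3_eq_crossProduct (p q : E3) :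
    cross3 p q = WithLp.toLp 2 (crossProduct (WithLp.ofLp p) (WithLp.ofLp q)) := by
  ext i; fin_cases i <;> simp [cross3, cross_apply]

lemma norm_cross3_sq (p q : E3) :
    ‖cross3 p q‖ ^ 2 = ‖p‖ ^ 2 * ‖q‖ ^ 2 - inner ℝ p q ^ 2 := by
  simp only [← real_inner_self_eq_norm_sq, EuclideanSpace.inner_eq_star_dotProduct, star_trivial,
    cross3_eq_crossProduct, cross_dot_cross,
    dotProduct_comm (WithLp.ofLp q) (WithLp.ofLp p)]
  ring

lemma en_sq (p : E3) : en p ^ 2 = 1 + ‖p‖ ^ 2 := Real.sq_sqrt (by positivity)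

lemma en_pos (p : E3) : 0 < en p := Real.sqrt_pos.2 (by positivity)

lemma two_mul_en_mul_en_mul_rel (p q : E3) :
    2 * (en p * en q) * rel p q = ‖p - q‖ ^ 2 + ‖cross3 p q‖ ^ 2 + rel p q ^ 2 := by
  have hsq : (en p * en q) ^ 2 = (1 + ‖p‖ ^ 2) * (1 + ‖q‖ ^ 2) := by rw [mul_pow, en_sq, en_sq]
  rw [norm_sub_sq_real, norm_cross3_sq, rel]
  linear_combination hsq

lemma norm_sub_sq_eq_two_mul_rel_add (p q : E3) :
    ‖p - q‖ ^ 2 = 2 * rel p q + (en p - en q) ^ 2 := by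
  rw [norm_sub_sq_real, rel]
  linear_combination -en_sq p - en_sq q

theorem rho_two_sided (p q : E3) :
    (‖p - q‖^2 + ‖cross3 p q‖^2) / (2 * (en p * en q)) ≤ rel p q ∧
      rel p q ≤ ‖p - q‖^2 / 2 := by
  constructor
  · have hpos : 0 < 2 * (en p * en q) :=
      mul_pos two_pos (mul_pos (en_pos p) (en_pos q))
    rw [div_le_iff₀ hpos, mul_comm, two_mul_en_mul_en_mul_rel]
    linarith [sq_nonneg (rel p q)]
  · linarith [norm_sub_sq_eq_two_mul_rel_add p q, sq_nonneg (en p - en q)]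
end
end

section
/- There exists a constant c > 0 such that for all p, q ∈ ℝ³ with p ≠ q, the function Λ(p,q) = (ρ+1)²(ρτ)^{-3/2}/(p⁰q⁰) satisfies 0 ≤ Λ(p,q) ≤ c((p⁰q⁰)^{1/2}|p-q|^{-3} · 1_A(p,q) + |p-q|^{-2} · 1_{A^c}(p,q)), where A = {(p,q) : √(p⁰q⁰) ≥ |p-q|}. -/
noncomputable section
open Matrix MeasureTheory

/-- Λ(p,q) = (ρ+1)²/(p⁰q⁰) · (ρτ)^{-3/2} -/
def Lam (p q : E3) : ℝ :=
  (rel p q + 1)^2 / (en p * en q) * (rel p q * (rel p q + 2)) ^ (-(3:ℝ)/2)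

/-!
Write `s = p⁰q⁰`, `r = |p - q|` and `σ = √(ρτ)`, so that `Λ = (σ² + 1) / (s σ³)`. The identity
`2sρ - r² = (s - 1 - |p||q|)² + 2(s - 1)(|p||q| - p·q)` gives `r² ≤ 2sρ`; since `2ρ ≤ σ²` and
`ρ ≤ σ` this yields `r ≤ √s σ` and `r² ≤ 2sσ`. On `A` one bounds `σ² + 1` by `2` or by `2σ²`
according as `σ ≤ 1` or `σ ≥ 1`; off `A` necessarily `σ > 1`, and `σ² + 1 ≤ 2σ²` suffices.
-/

lemma one_le_en (p : E3) : 1 ≤ en p :=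
  Real.one_le_sqrt.mpr (le_add_of_nonneg_right (sq_nonneg _))

lemma en_mul_en_sq (p q : E3) : (en p * en q) ^ 2 = (1 + ‖p‖ ^ 2) * (1 + ‖q‖ ^ 2) := by
  rw [mul_pow, en, en, Real.sq_sqrt (by positivity), Real.sq_sqrt (by positivity)]

lemma norm_sub_sq_le_two_mul_rel (p q : E3) :
    ‖p - q‖ ^ 2 ≤ 2 * (en p * en q) * rel p q := by
  have hs := one_le_mul_of_one_le_of_one_le (one_le_en p) (one_le_en q)
  have hpq : inner ℝ p q ≤ ‖p‖ * ‖q‖ := real_inner_le_norm p q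
  have hsq := en_mul_en_sq p q
  rw [rel, norm_sub_sq_real]
  nlinarith [sq_nonneg (en p * en q - 1 - ‖p‖ * ‖q‖),
    mul_nonneg (sub_nonneg.mpr hs) (sub_nonneg.mpr hpq)]

lemma rpow_neg_three_halves {x : ℝ} (hx : 0 ≤ x) : x ^ (-(3 : ℝ) / 2) = 1 / √x ^ 3 := by
  rw [Real.sqrt_eq_rpow, ← Real.rpow_natCast, ← Real.rpow_mul hx, one_div, ← Real.rpow_neg hx]
  norm_num

lemma sq_add_one_div_le_of_le {w σ r : ℝ} (hw : 0 < w) (hσ : 0 < σ) (hr : 0 < r)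
    (hrσ : r ≤ w * σ) (hrw : r ≤ w) :
    (σ ^ 2 + 1) / (w ^ 2 * σ ^ 3) ≤ 2 * (w / r ^ 3) := by
  rw [mul_div_assoc', div_le_div_iff₀ (by positivity) (by positivity)]
  rcases le_total σ 1 with hσ1 | hσ1
  · calc (σ ^ 2 + 1) * r ^ 3 ≤ 2 * (w * σ) ^ 3 := by
          gcongr
          nlinarith
      _ = 2 * w * (w ^ 2 * σ ^ 3) := by ring
  · have hr3 : r ^ 3 ≤ w * σ * w ^ 2 := by
      rw [pow_succ']
      exact mul_le_mul hrσ (pow_le_pow_left₀ hr.le hrw 2) (by positivity) (by positivity)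
    calc (σ ^ 2 + 1) * r ^ 3 ≤ 2 * σ ^ 2 * (w * σ * w ^ 2) := by
          gcongr
          nlinarith
      _ = 2 * w * (w ^ 2 * σ ^ 3) := by ring

lemma sq_add_one_div_le_of_lt {w σ r : ℝ} (hw : 0 < w) (hσ : 0 < σ) (hr : 0 < r)
    (hrσ : r ≤ w * σ) (hrσ' : r ^ 2 ≤ 2 * w ^ 2 * σ) (hwr : w < r) :
    (σ ^ 2 + 1) / (w ^ 2 * σ ^ 3) ≤ 4 * (1 / r ^ 2) := by
  have hσ1 : 1 < σ := by nlinarith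
  rw [mul_one_div, div_le_div_iff₀ (by positivity) (by positivity)]
  calc (σ ^ 2 + 1) * r ^ 2 ≤ 2 * σ ^ 2 * (2 * w ^ 2 * σ) := by
        gcongr
        nlinarith
    _ = 4 * (w ^ 2 * σ ^ 3) := by ring

lemma sq_add_one_div_mul_rpow_le_of_sq_le {s ρ r : ℝ} (hs : 0 < s) (hr : 0 < r)
    (h : r ^ 2 ≤ 2 * s * ρ) :
    0 ≤ (ρ + 1) ^ 2 / s * (ρ * (ρ + 2)) ^ (-(3 : ℝ) / 2) ∧
    (ρ + 1) ^ 2 / s * (ρ * (ρ + 2)) ^ (-(3 : ℝ) / 2) ≤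
      4 * (if √s ≥ r then √s / r ^ 3 else 1 / r ^ 2) := by
  have hρ : 0 < ρ := by nlinarith
  set σ := √(ρ * (ρ + 2))
  set w := √s
  have hσ : 0 < σ := Real.sqrt_pos.mpr (by positivity)
  have hw : 0 < w := Real.sqrt_pos.mpr hs
  have hσ2 : σ ^ 2 = ρ * (ρ + 2) := Real.sq_sqrt (by positivity)
  have hw2 : w ^ 2 = s := Real.sq_sqrt hs.le
  have heq : (ρ + 1) ^ 2 / s * (ρ * (ρ + 2)) ^ (-(3 : ℝ) / 2) =
      (σ ^ 2 + 1) / (w ^ 2 * σ ^ 3) := by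
    rw [rpow_neg_three_halves (by positivity), hσ2, hw2]
    field_simp
    ring
  have hrσ : r ≤ w * σ := by
    refine (pow_le_pow_iff_left₀ hr.le (by positivity) two_ne_zero).1 ?_
    rw [mul_pow, hσ2, hw2]
    nlinarith
  have hρσ : ρ ≤ σ := Real.le_sqrt_of_sq_le (by nlinarith)
  refine ⟨heq ▸ by positivity, ?_⟩
  rw [heq]
  split_ifs with hrw
  · exact (sq_add_one_div_le_of_le hw hσ hr hrσ hrw).trans (by gcongr; norm_num)
  · refine sq_add_one_div_le_of_lt hw hσ hr hrσ ?_ (not_le.mp hrw)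
    rw [hw2]
    nlinarith

theorem Lam_bound :
    ∃ c > 0, ∀ p q : E3, p ≠ q →
      0 ≤ Lam p q ∧
      Lam p q ≤ c * (if Real.sqrt (en p * en q) ≥ ‖p - q‖
        then Real.sqrt (en p * en q) / ‖p - q‖^3
        else 1 / ‖p - q‖^2) := by
  refine ⟨4, by norm_num, fun p q hpq => ?_⟩
  have hs : 0 < en p * en q :=
    mul_pos (one_pos.trans_le (one_le_en p)) (one_pos.trans_le (one_le_en q))
  exact sq_add_one_div_mul_rpow_le_of_sq_le hs (norm_pos_iff.mpr (sub_ne_zero.mpr hpq))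
    (norm_sub_sq_le_two_mul_rel p q)
end
end

section
/- There exists c > 0 such that for all p, q ∈ ℝ³ with p ≠ q: |B(p,q)| ≤ c(min(p⁰,q⁰)|p-q|^{-2} 1_A(p,q) + 1_{A^c}(p,q)), where B(p,q) = Λ(p,q)(ρ+2)(q-p), Λ(p,q) = (ρ+1)²(ρτ)^{-3/2}/(p⁰q⁰), ρ = p⁰q⁰-p·q-1, τ = ρ+2, and A = {(p,q) : √(p⁰q⁰) ≥ |p-q|}. -/
noncomputable section
open Matrix MeasureTheory

/-- the drift B(p,q) = Λ(p,q)(ρ+2)(q-p) -/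
def Bdrift (p q : E3) : E3 := (Lam p q * (rel p q + 2)) • (q - p)

lemma norm_le_en (p : E3) : ‖p‖ ≤ en p :=
  Real.le_sqrt_of_sq_le (by linarith)

lemma abs_en_sub_en_le (p q : E3) : |en p - en q| ≤ ‖p - q‖ := by
  have hp := en_sq p
  have hq := en_sq q
  -- `en p - en q = (‖p‖² - ‖q‖²) / (en p + en q)` and `‖p‖ + ‖q‖ ≤ en p + en q`
  have hnorm : |‖p‖ - ‖q‖| ≤ ‖p - q‖ := abs_norm_sub_norm_le p q
  rw [abs_le] at hnorm ⊢
  constructor <;> nlinarith [norm_le_en p, norm_le_en q, norm_nonneg p, norm_nonneg q]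

lemma norm_sub_sq_add_rel_sq_le (p q : E3) :
    ‖p - q‖ ^ 2 + rel p q ^ 2 ≤ 2 * (en p * en q) * rel p q := by
  have hcs : inner ℝ p q ^ 2 ≤ (‖p‖ * ‖q‖) ^ 2 := by
    simpa only [sq_abs] using pow_le_pow_left₀ (abs_nonneg _) (abs_real_inner_le_norm p q) 2
  have hdefect : 2 * (en p * en q) * rel p q - ‖p - q‖ ^ 2 - rel p q ^ 2
      = (‖p‖ * ‖q‖) ^ 2 - inner ℝ p q ^ 2 := by
    rw [rel, norm_sub_sq_real]
    linear_combination en q ^ 2 * en_sq p + (1 + ‖p‖ ^ 2) * en_sq q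
  linarith

lemma rel_pos {p q : E3} (hpq : p ≠ q) : 0 < rel p q := by
  have hw : 0 < ‖p - q‖ := norm_pos_iff.mpr (sub_ne_zero.mpr hpq)
  have hE : 0 < en p * en q := mul_pos (by linarith [one_le_en p]) (by linarith [one_le_en q])
  by_contra! hρ
  nlinarith [norm_sub_sq_add_rel_sq_le p q, mul_nonpos_of_nonneg_of_nonpos hE.le hρ,
    sq_nonneg (rel p q)]

lemma rpow_neg_three_halves_sq {x : ℝ} (hx : 0 ≤ x) : (x ^ (-(3 : ℝ) / 2)) ^ 2 = (x ^ 3)⁻¹ := by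
  rw [← Real.rpow_natCast, ← Real.rpow_mul hx, ← Real.rpow_natCast x 3, ← Real.rpow_neg hx]
  norm_num

lemma norm_Bdrift_sq (p q : E3) (hρ : 0 ≤ rel p q) :
    ‖Bdrift p q‖ ^ 2 = (rel p q + 1) ^ 4 * (rel p q + 2) ^ 2 / (rel p q * (rel p q + 2)) ^ 3
      * (‖p - q‖ ^ 2 / (en p * en q) ^ 2) := by
  rw [Bdrift, norm_smul, mul_pow, Real.norm_eq_abs, sq_abs, Lam, norm_sub_rev, mul_pow, mul_pow,
    rpow_neg_three_halves_sq (by positivity)]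
  ring

lemma drift_factor_le {ρ : ℝ} (hρ : 0 < ρ) :
    (ρ + 1) ^ 4 * (ρ + 2) ^ 2 / (ρ * (ρ + 2)) ^ 3 ≤ 4 * ((ρ + 1) ^ 2 / (ρ * (ρ + 2))) ^ 3 := by
  rw [div_pow, ← pow_mul, mul_div_assoc']
  gcongr ?_ / _
  calc (ρ + 1) ^ 4 * (ρ + 2) ^ 2 ≤ (ρ + 1) ^ 4 * (2 * (ρ + 1)) ^ 2 := by gcongr; linarith
    _ = 4 * (ρ + 1) ^ (2 * 3) := by ring

lemma div_mul_sq_le {ρ E w : ℝ} (hρ : 0 < ρ) (hE : 0 ≤ E) (h : w ^ 2 + ρ ^ 2 ≤ 2 * E * ρ) :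
    (ρ + 1) ^ 2 / (ρ * (ρ + 2)) * w ^ 2 ≤ w ^ 2 + E := by
  rw [div_mul_eq_mul_div, div_le_iff₀ (by positivity)]
  nlinarith [mul_nonneg hE (sq_nonneg ρ)]

lemma mul_le_four_mul_min_sq {a b : ℝ} (h : (a - b) ^ 2 ≤ a * b) :
    a * b ≤ 4 * min a b ^ 2 := by
  rcases le_total a b with hab | hab
  · rw [min_eq_left hab]; nlinarith
  · rw [min_eq_right hab]; nlinarith

lemma drift_sq_le_near {E w v m : ℝ} (hE : 0 < E) (hw : 0 < w) (hv : 0 ≤ v)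
    (hvw : v * w ^ 2 ≤ 2 * E) (hm : E ≤ 4 * m ^ 2) :
    4 * v ^ 3 * (w ^ 2 / E ^ 2) ≤ (12 * (m / w ^ 2)) ^ 2 :=
  calc 4 * v ^ 3 * (w ^ 2 / E ^ 2) = 4 * (v * w ^ 2) ^ 3 / (E ^ 2 * w ^ 4) := by
        field_simp
    _ ≤ 4 * (2 * E) ^ 3 / (E ^ 2 * w ^ 4) := by gcongr
    _ = 32 * E / w ^ 4 := by field_simp; ring
    _ ≤ 32 * (4 * m ^ 2) / w ^ 4 := by gcongr
    _ ≤ (12 * (m / w ^ 2)) ^ 2 := by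
        rw [show (12 * (m / w ^ 2)) ^ 2 = 144 * m ^ 2 / w ^ 4 by ring]
        gcongr ?_ / _
        nlinarith [sq_nonneg m]

lemma drift_sq_le_far {E w v : ℝ} (hE : 0 < E) (hw : 0 ≤ w) (hv : 0 ≤ v) (hv2 : v ≤ 2)
    (hwE : w ≤ 2 * E) : 4 * v ^ 3 * (w ^ 2 / E ^ 2) ≤ 12 ^ 2 :=
  calc 4 * v ^ 3 * (w ^ 2 / E ^ 2) = 4 * v ^ 3 * (w / E) ^ 2 := by rw [div_pow]
    _ ≤ 4 * 2 ^ 3 * 2 ^ 2 := by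
        gcongr
        rwa [div_le_iff₀ hE]
    _ ≤ 12 ^ 2 := by norm_num

lemma le_twelve_mul_of_sq_le {a b w v X : ℝ} (ha : 1 ≤ a) (hb : 1 ≤ b) (hw : 0 < w) (hv : 0 ≤ v)
    (hab : |a - b| ≤ w) (hwab : w ≤ a + b) (hvw : v * w ^ 2 ≤ w ^ 2 + a * b)
    (hX : X ^ 2 ≤ 4 * v ^ 3 * (w ^ 2 / (a * b) ^ 2)) :
    X ≤ 12 * if √(a * b) ≥ w then min a b / w ^ 2 else 1 := by
  have hE : 0 < a * b := by nlinarith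
  split_ifs with hnear
  · have hwE : w ^ 2 ≤ a * b := (Real.le_sqrt hw.le hE.le).mp hnear
    have hmin : a * b ≤ 4 * min a b ^ 2 :=
      mul_le_four_mul_min_sq (by nlinarith [sq_abs (a - b), abs_nonneg (a - b)])
    refine le_of_pow_le_pow_left₀ two_ne_zero ?_ (hX.trans (drift_sq_le_near hE hw hv ?_ hmin))
    · positivity
    · linarith
  · have hEw : a * b < w ^ 2 := (Real.sqrt_lt' hw).mp (not_le.mp hnear)
    refine le_of_pow_le_pow_left₀ two_ne_zero (by norm_num) ?_
    rw [mul_one]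
    exact hX.trans (drift_sq_le_far hE hw.le hv (by nlinarith) (by nlinarith))

theorem B_bound :
    ∃ c > 0, ∀ p q : E3, p ≠ q →
      ‖Bdrift p q‖ ≤ c * (if Real.sqrt (en p * en q) ≥ ‖p - q‖
        then min (en p) (en q) / ‖p - q‖^2
        else 1) := by
  refine ⟨12, by norm_num, fun p q hpq => ?_⟩
  have hρ := rel_pos hpq
  have hE : 0 ≤ en p * en q := by nlinarith [one_le_en p, one_le_en q]
  refine le_twelve_mul_of_sq_le (one_le_en p) (one_le_en q)
    (norm_pos_iff.mpr (sub_ne_zero.mpr hpq)) (by positivity) (abs_en_sub_en_le p q)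
    ((norm_sub_le p q).trans (add_le_add (norm_le_en p) (norm_le_en q)))
    (div_mul_sq_le hρ hE (norm_sub_sq_add_rel_sq_le p q)) ?_
  rw [norm_Bdrift_sq p q hρ.le]
  gcongr
  exact drift_factor_le hρ
end
end

section
/- For all p, q ∈ ℝ³, |q⁰p - p⁰q| ≤ 2 min(p⁰, q⁰) |p-q|, where p⁰ = √(1+|p|²), q⁰ = √(1+|q|²). -/
noncomputable section
open Matrix MeasureTheory

/-! The energy is at least the momentum and is 1-Lipschitz in it, so writing
`q⁰ p - p⁰ q = q⁰ (p - q) + (q⁰ - p⁰) q` bounds the left side by `2 q⁰ |p - q|`;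
the bound with `p⁰` follows by symmetry. -/

lemma abs_sqrt_one_add_sq_sub_le (s t : ℝ) :
    |√(1 + s ^ 2) - √(1 + t ^ 2)| ≤ |s - t| := by
  set a := √(1 + s ^ 2)
  set b := √(1 + t ^ 2)
  have ha : a ^ 2 = 1 + s ^ 2 := Real.sq_sqrt (by positivity)
  have hb : b ^ 2 = 1 + t ^ 2 := Real.sq_sqrt (by positivity)
  have hs : |s| ≤ a := Real.abs_le_sqrt (by linarith)
  have ht : |t| ≤ b := Real.abs_le_sqrt (by linarith)
  have hab : 0 < a + b := by positivity
  have key : |a - b| * (a + b) ≤ |s - t| * (a + b) := by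
    calc |a - b| * (a + b) = |(a - b) * (a + b)| := by rw [abs_mul, abs_of_pos hab]
      _ = |(s - t) * (s + t)| := by congr 1; linear_combination ha - hb
      _ = |s - t| * |s + t| := abs_mul _ _
      _ ≤ |s - t| * (a + b) := by
          gcongr
          exact (abs_add_le s t).trans (add_le_add hs ht)
  exact le_of_mul_le_mul_right key hab

lemma norm_smul_sub_smul_le {E : Type*} [SeminormedAddCommGroup E] [NormedSpace ℝ E]
    (x y : E) {a b : ℝ} (hb : 0 ≤ b) (hab : |a - b| ≤ ‖x - y‖) (hy : ‖y‖ ≤ b) :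
    ‖b • x - a • y‖ ≤ 2 * b * ‖x - y‖ :=
  calc ‖b • x - a • y‖ = ‖b • (x - y) + (b - a) • y‖ := by congr 1; module
    _ ≤ b * ‖x - y‖ + |a - b| * ‖y‖ := by
        refine (norm_add_le _ _).trans_eq ?_
        rw [norm_smul, norm_smul, Real.norm_of_nonneg hb, Real.norm_eq_abs, abs_sub_comm]
    _ ≤ b * ‖x - y‖ + ‖x - y‖ * b := by gcongr
    _ = 2 * b * ‖x - y‖ := by ring

theorem weighted_diff_bound (p q : E3) :
    ‖en q • p - en p • q‖ ≤ 2 * min (en p) (en q) * ‖p - q‖ := by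
  rcases min_choice (en p) (en q) with h | h <;> rw [h]
  · rw [norm_sub_rev, norm_sub_rev p q]
    exact norm_smul_sub_smul_le q p (Real.sqrt_nonneg _) (abs_en_sub_en_le q p) (norm_le_en p)
  · exact norm_smul_sub_smul_le p q (Real.sqrt_nonneg _) (abs_en_sub_en_le p q) (norm_le_en q)
end
end

section
/- Let Ψ : [0,∞) → [0,∞) be defined by Ψ(x) = x(1 - log x) for 0 < x ≤ 1, Ψ(0) = 0, and Ψ(x) = x for x > 1. Let T > 0 and let γ ∈ L¹([0,T]), ρ ∈ L^∞([0,T]) be nonnegative functions satisfying ρ(t) ≤ ρ(0) + ∫₀ᵗ γ(s)Ψ(ρ(s)) ds for every t ∈ [0,T]. If ρ(0) = 0, then ρ(t) = 0 for all t ∈ [0,T]. -/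
noncomputable section
open Matrix MeasureTheory

/-- the function Ψ of Definition 1.1 -/
def Psi (x : ℝ) : ℝ := if x ≤ 1 then x * (1 - Real.log x) else x

/-! The function `m t = ∫ s in [0, t], γ s * Ψ (ρ s)` dominates `ρ`, is continuous and
nondecreasing, and for `a ≤ b` satisfies `m b - m a ≤ Ψ (m b) * (Γ b - Γ a)`, where `Γ` is the
primitive of `γ`. If `m t > 0`, choose times `s n` decreasing in `n` with `m (s n) = exp (-(n + k))`.
Since `Ψ (exp (-j)) = (j + 1) * exp (-j)`, the increment `Γ (s n) - Γ (s (n + 1))` is at least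
`(1 - exp (-1)) / (n + k + 1)`; these increments telescope to at most `Γ T - Γ 0`, contradicting
the divergence of the harmonic series. This is Osgood's criterion `∫₀ dx / Ψ x = ∞` in discrete
form. -/

open Real Set

theorem Psi_of_le_one {x : ℝ} (hx : x ≤ 1) : Psi x = x * (1 - log x) := if_pos hx

theorem Psi_of_one_le {x : ℝ} (hx : 1 ≤ x) : Psi x = x := by
  rcases hx.lt_or_eq with hx | rfl
  · exact if_neg hx.not_ge
  · simp [Psi]

theorem Psi_eq_add_negMulLog (x : ℝ) : Psi x = x + negMulLog (min x 1) := by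
  rcases le_total x 1 with hx | hx
  · rw [Psi_of_le_one hx, min_eq_left hx, negMulLog]; ring
  · simp [Psi_of_one_le hx, min_eq_right hx]

theorem continuous_Psi : Continuous Psi := by
  simp_rw [funext Psi_eq_add_negMulLog]
  fun_prop

theorem monotoneOn_Psi : MonotoneOn Psi (Ici 0) := by
  have hsmall : MonotoneOn Psi (Icc 0 1) := by
    refine monotoneOn_of_hasDerivWithinAt_nonneg (convex_Icc 0 1) continuous_Psi.continuousOn
      (f' := fun x => -log x) (fun x hx => ?_) (fun x hx => ?_)
    · rw [interior_Icc] at hx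
      have h := ((hasDerivAt_id x).add (hasDerivAt_negMulLog hx.1.ne')).hasDerivWithinAt
        (s := interior (Icc 0 1))
      refine (h.congr (fun y hy => ?_) ?_).congr_deriv (by simp)
      · rw [interior_Icc] at hy; simp [Psi_eq_add_negMulLog, min_eq_left hy.2.le]
      · simp [Psi_eq_add_negMulLog, min_eq_left hx.2.le]
    · rw [interior_Icc] at hx
      exact neg_nonneg.2 (log_nonpos hx.1.le hx.2.le)
  have hlarge : MonotoneOn Psi (Ici 1) :=
    monotoneOn_id.congr fun x hx => (Psi_of_one_le hx).symm
  rw [← Icc_union_Ici_eq_Ici zero_le_one]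
  exact hsmall.union_right hlarge (isGreatest_Icc zero_le_one) isLeast_Ici

theorem Psi_nonneg {x : ℝ} (hx : 0 ≤ x) : 0 ≤ Psi x := by
  simpa [Psi] using monotoneOn_Psi self_mem_Ici hx hx

theorem Psi_exp_neg_natCast (n : ℕ) : Psi (exp (-n)) = exp (-n) * (n + 1) := by
  rw [Psi_of_le_one (exp_le_one_iff.2 (by simp)), log_exp]; ring

theorem integrableOn_mul_Psi_comp {α : Type*} [MeasurableSpace α] {μ : Measure α} {s : Set α}
    {γ ρ : α → ℝ} {C : ℝ} (hs : MeasurableSet s) (hγ : IntegrableOn γ s μ) (hρ : Measurable ρ)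
    (hρ0 : ∀ x ∈ s, 0 ≤ ρ x) (hρC : ∀ x ∈ s, ρ x ≤ C) :
    IntegrableOn (fun x => γ x * Psi (ρ x)) s μ := by
  refine hγ.mul_bdd (c := max 1 C) (continuous_Psi.measurable.comp hρ).aestronglyMeasurable
    (ae_restrict_of_forall_mem hs fun x hx => ?_)
  rw [Real.norm_of_nonneg (Psi_nonneg (hρ0 x hx)), ← Psi_of_one_le (le_max_left 1 C)]
  exact monotoneOn_Psi (hρ0 x hx) (zero_le_one.trans (le_max_left 1 C))
    ((hρC x hx).trans (le_max_right 1 C))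

theorem setIntegral_mul_Psi_le {α : Type*} [MeasurableSpace α] {μ : Measure α} {s : Set α}
    {γ ρ : α → ℝ} {c : ℝ} (hs : MeasurableSet s) (hγ0 : ∀ x ∈ s, 0 ≤ γ x)
    (hγ : IntegrableOn γ s μ) (hg : IntegrableOn (fun x => γ x * Psi (ρ x)) s μ)
    (hρ : ∀ x ∈ s, 0 ≤ ρ x ∧ ρ x ≤ c) :
    ∫ x in s, γ x * Psi (ρ x) ∂μ ≤ Psi c * ∫ x in s, γ x ∂μ := by
  rw [← integral_const_mul]
  refine setIntegral_mono_on hg (hγ.const_mul _) hs fun x hx => ?_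
  rw [mul_comm (Psi c)]
  obtain ⟨hρ0, hρc⟩ := hρ x hx
  exact mul_le_mul_of_nonneg_left (monotoneOn_Psi hρ0 (hρ0.trans hρc) hρc) (hγ0 x hx)

theorem monotoneOn_setIntegral_Icc {f : ℝ → ℝ} {a b : ℝ} (hf : IntegrableOn f (Icc a b))
    (hf0 : ∀ x ∈ Icc a b, 0 ≤ f x) :
    MonotoneOn (fun t => ∫ x in Icc a t, f x) (Icc a b) := fun _ _ _ hy hxy =>
  setIntegral_mono_set (hf.mono_set (Icc_subset_Icc_right hy.2))
    (ae_restrict_of_forall_mem measurableSet_Icc fun x hx => hf0 x ⟨hx.1, hx.2.trans hy.2⟩)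
    (Icc_subset_Icc_right hxy).eventuallyLE

theorem setIntegral_Icc_sub_setIntegral_Icc {f : ℝ → ℝ} {a b c : ℝ}
    (hf : IntegrableOn f (Icc a c)) (hab : a ≤ b) (hbc : b ≤ c) :
    (∫ x in Icc a c, f x) - ∫ x in Icc a b, f x = ∫ x in Ioc b c, f x := by
  have hdisj : Disjoint (Icc a b) (Ioc b c) :=
    (Iic_disjoint_Ioi le_rfl).mono Icc_subset_Iic_self Ioc_subset_Ioi_self
  rw [← Icc_union_Ioc_eq_Icc hab hbc, setIntegral_union hdisj measurableSet_Ioc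
    (hf.mono_set (Icc_subset_Icc_right hbc))
    (hf.mono_set (Ioc_subset_Icc_self.trans (Icc_subset_Icc_left hab))), add_sub_cancel_left]

theorem summable_sub_succ_of_antitone {f : ℕ → ℝ} (hf : Antitone f) {c : ℝ} (hc : ∀ n, c ≤ f n) :
    Summable fun n => f n - f (n + 1) :=
  summable_of_sum_range_le (c := f 0 - c) (fun n => sub_nonneg.2 (hf n.le_succ))
    fun n => by rw [Finset.sum_range_sub']; linarith [hc n]

theorem not_summable_div_natCast_add {a : ℝ} (ha : 0 < a) (k : ℕ) :
    ¬Summable fun n : ℕ => a / (n + k + 1) := by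
  intro h
  have := (Real.summable_one_div_nat_add_rpow (k + 1) 1).1 ((h.div_const a).congr fun n => ?_)
  · exact lt_irrefl _ this
  · rw [rpow_one, abs_of_pos (by positivity), ← add_assoc]; field_simp

theorem div_succ_le_of_exp_neg_sub_le_Psi_mul {n : ℕ} {d : ℝ}
    (h : exp (-n) - exp (-(n + 1 : ℕ)) ≤ Psi (exp (-n)) * d) :
    (1 - exp (-1)) / (n + 1) ≤ d := by
  rw [Psi_exp_neg_natCast, Nat.cast_succ, neg_add, exp_add, mul_assoc, ← mul_one_sub] at h
  rw [div_le_iff₀ (by positivity), mul_comm d]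
  exact le_of_mul_le_mul_left h (exp_pos _)

theorem eq_zero_of_sub_le_Psi_mul_sub {m Γ : ℝ → ℝ} {T : ℝ}
    (hm : ContinuousOn m (Icc 0 T)) (hm0 : m 0 = 0) (hm_mono : MonotoneOn m (Icc 0 T))
    (hΓ : MonotoneOn Γ (Icc 0 T))
    (hstep : ∀ a ∈ Icc 0 T, ∀ b ∈ Icc 0 T, a ≤ b → m b - m a ≤ Psi (m b) * (Γ b - Γ a)) :
    ∀ t ∈ Icc 0 T, m t = 0 := by
  intro t ht
  have hm_nonneg : 0 ≤ m t := hm0 ▸ hm_mono ⟨le_rfl, ht.1.trans ht.2⟩ ht ht.1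
  by_contra hne
  obtain ⟨k, hk⟩ : ∃ k : ℕ, exp (-k) < m t := by
    obtain ⟨k, hk⟩ := exists_nat_gt (-log (m t))
    exact ⟨k, by rwa [← exp_log (hm_nonneg.lt_of_ne' hne), exp_lt_exp, neg_lt]⟩
  have hlevel : ∀ n : ℕ, ∃ s ∈ Icc 0 t, m s = exp (-(n + k : ℕ)) := fun n =>
    intermediate_value_Icc ht.1 (hm.mono (Icc_subset_Icc_right ht.2))
      ⟨by rw [hm0]; exact (exp_pos _).le, (exp_le_exp.2 (by simp)).trans hk.le⟩
  choose s hs hms using hlevel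
  have hsT : ∀ n, s n ∈ Icc 0 T := fun n => ⟨(hs n).1, (hs n).2.trans ht.2⟩
  have hs_anti : Antitone s := antitone_nat_of_succ_le fun n =>
    (hm_mono.reflect_lt (hsT _) (hsT _) (by rw [hms, hms]; gcongr; simp)).le
  have ha : 0 < 1 - exp (-1) := sub_pos.2 (exp_lt_one_iff.2 neg_one_lt_zero)
  refine not_summable_div_natCast_add ha k
    (.of_nonneg_of_le (fun n => by positivity) (fun n => ?_)
      (summable_sub_succ_of_antitone (f := Γ ∘ s) (c := Γ 0)
        (fun i j hij => hΓ (hsT j) (hsT i) (hs_anti hij))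
        (fun n => hΓ ⟨le_rfl, ht.1.trans ht.2⟩ (hsT n) (hsT n).1)))
  have h := hstep _ (hsT (n + 1)) _ (hsT n) (hs_anti n.le_succ)
  rw [hms, hms, Nat.add_right_comm] at h
  simpa [add_assoc] using div_succ_le_of_exp_neg_sub_le_Psi_mul h

theorem gronwall_Psi_general (T : ℝ) (γ ρ : ℝ → ℝ)
    (hγpos : ∀ t ∈ Set.Icc 0 T, 0 ≤ γ t)
    (hρpos : ∀ t ∈ Set.Icc 0 T, 0 ≤ ρ t)
    (hγint : IntegrableOn γ (Set.Icc 0 T))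
    (hρmeas : Measurable ρ)
    (hρbdd : ∃ C : ℝ, ∀ t ∈ Set.Icc 0 T, ρ t ≤ C)
    (hineq : ∀ t ∈ Set.Icc 0 T, ρ t ≤ ρ 0 + ∫ s in Set.Icc 0 t, γ s * Psi (ρ s))
    (h0 : ρ 0 = 0) :
    ∀ t ∈ Set.Icc 0 T, ρ t = 0 := by
  obtain ⟨C, hC⟩ := hρbdd
  have hg : IntegrableOn (fun s => γ s * Psi (ρ s)) (Icc 0 T) :=
    integrableOn_mul_Psi_comp measurableSet_Icc hγint hρmeas hρpos hC
  set m := fun t => ∫ s in Icc 0 t, γ s * Psi (ρ s)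
  have hρm : ∀ t ∈ Icc 0 T, ρ t ≤ m t := by simpa [h0] using hineq
  have hm_mono : MonotoneOn m (Icc 0 T) :=
    monotoneOn_setIntegral_Icc hg fun s hs => mul_nonneg (hγpos s hs) (Psi_nonneg (hρpos s hs))
  have hm : ∀ t ∈ Icc 0 T, m t = 0 := by
    refine eq_zero_of_sub_le_Psi_mul_sub (intervalIntegral.continuousOn_primitive_Icc hg)
      (by simp [m]) hm_mono (monotoneOn_setIntegral_Icc hγint hγpos) fun a ha b hb hab => ?_
    have hsub : Ioc a b ⊆ Icc 0 T := Ioc_subset_Icc_self.trans (Icc_subset_Icc ha.1 hb.2)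
    simp only [m]
    rw [setIntegral_Icc_sub_setIntegral_Icc (hg.mono_set (Icc_subset_Icc_right hb.2)) ha.1 hab,
      setIntegral_Icc_sub_setIntegral_Icc (hγint.mono_set (Icc_subset_Icc_right hb.2)) ha.1 hab]
    exact setIntegral_mul_Psi_le measurableSet_Ioc (fun s hs => hγpos s (hsub hs))
      (hγint.mono_set hsub) (hg.mono_set hsub)
      fun s hs => ⟨hρpos s (hsub hs), (hρm s (hsub hs)).trans (hm_mono (hsub hs) hb hs.2)⟩
  exact fun t ht => le_antisymm ((hρm t ht).trans (hm t ht).le) (hρpos t ht)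

theorem gronwall_Psi (T : ℝ) (hT : 0 < T) (γ ρ : ℝ → ℝ)
    (hγpos : ∀ t ∈ Set.Icc 0 T, 0 ≤ γ t)
    (hρpos : ∀ t ∈ Set.Icc 0 T, 0 ≤ ρ t)
    (hγint : IntegrableOn γ (Set.Icc 0 T))
    (hρmeas : Measurable ρ)
    (hρbdd : ∃ C : ℝ, ∀ t ∈ Set.Icc 0 T, ρ t ≤ C)
    (hineq : ∀ t ∈ Set.Icc 0 T, ρ t ≤ ρ 0 + ∫ s in Set.Icc 0 t, γ s * Psi (ρ s))
    (h0 : ρ 0 = 0) :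
    ∀ t ∈ Set.Icc 0 T, ρ t = 0 :=
  gronwall_Psi_general T γ ρ hγpos hρpos hγint hρmeas hρbdd hineq h0
end
end
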